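/- No finite projective plane is magic over the real numbers. More precisely, let Π = (P, 𝓛) be a finite projective plane and let f : P → ℝ be a function such that there exists c ∈ ℝ with ∑_{x ∈ L} f(x) = c for every line L ∈ 𝓛. Then f is a constant function; in particular, f is not injective. -/

import Mathlib

/-!
Summing the line sums over the `n + 1` lines through a point `p` of a plane of order `n` counts
`p` itself `n + 1` times and every other point exactly once, so `n • f p + ∑ x, f x = (n + 1) • c`.
Since `n ≠ 0`, the value `f p` does not depend on `p`.
-/

open Configuration

/-- The sum of `v` over the points of the line `l`. -/
noncomputable def lineSum {P L G : Type*} [Membership P L] [AddCommMonoid G]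
    (v : P → G) (l : L) : G :=
  ∑ᶠ x ∈ {x : P | x ∈ l}, v x

/-- `v : P → G` is line invariant if its sum along every line of `L` is the same. -/
def LineInvariant (P L : Type*) {G : Type*} [Membership P L] [AddCommMonoid G]
    (v : P → G) : Prop :=
  ∀ l l' : L, lineSum v l = lineSum v l'

open Finset

namespace Configuration

open scoped Classical

variable {P L G : Type*} [Membership P L]

lemma lineSum_eq_sum_filter [AddCommMonoid G] [Fintype P] (v : P → G) (l : L) :
    lineSum v l = ∑ x with x ∈ l, v x := by
  rw [lineSum, finsum_mem_eq_toFinset_sum]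
  congr 1
  ext x
  simp

lemma HasLines.card_filter_mem_and_mem_eq_one [HasLines P L] [Fintype L]
    {p q : P} (hpq : p ≠ q) : #{l : L | p ∈ l ∧ q ∈ l} = 1 := by
  simpa [card_eq_one_iff_existsUnique] using HasLines.existsUnique_line P L p q hpq

lemma card_filter_mem_eq_lineCount [Fintype L] (p : P) :
    #{l : L | p ∈ l} = lineCount L p := by
  rw [lineCount, Nat.card_eq_fintype_card, Fintype.card_subtype]

variable [ProjectivePlane P L] [Fintype P] [Fintype L]

theorem ProjectivePlane.sum_lineSum_filter_mem [AddCommMonoid G] (v : P → G) (p : P) :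
    ∑ l : L with p ∈ l, lineSum v l = order P L • v p + ∑ x, v x := by
  have hcount (x : P) : #{l : L | p ∈ l ∧ x ∈ l} = if x = p then order P L + 1 else 1 := by
    split_ifs with hx
    · subst hx
      simp_rw [and_self, card_filter_mem_eq_lineCount, ProjectivePlane.lineCount_eq]
    · exact HasLines.card_filter_mem_and_mem_eq_one (Ne.symm hx)
  calc ∑ l : L with p ∈ l, lineSum v l
      = ∑ x, ∑ l : L with p ∈ l ∧ x ∈ l, v x := by
        simp_rw [lineSum_eq_sum_filter]
        exact sum_comm' (by simp [and_comm])
    _ = ∑ x, (if x = p then order P L + 1 else 1) • v x := by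
        simp_rw [sum_const, hcount]
    _ = order P L • v p + ∑ x, v x := by
        rw [← add_sum_erase _ _ (mem_univ p), ← add_sum_erase _ _ (mem_univ p), if_pos rfl,
          succ_nsmul, add_assoc]
        congr 2
        refine sum_congr rfl fun x hx => ?_
        rw [if_neg (ne_of_mem_erase hx), one_smul]

theorem ProjectivePlane.eq_of_lineSum_eq [AddCancelCommMonoid G]
    [IsAddTorsionFree G] {v : P → G} {c : G} (hv : ∀ l : L, lineSum v l = c) (p q : P) :
    v p = v q := by
  have hsum (x : P) : order P L • v x + ∑ y, v y = #{l : L | x ∈ l} • c := by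
    rw [← sum_lineSum_filter_mem, ← sum_const]
    exact sum_congr rfl fun l _ => hv l
  have horder : order P L ≠ 0 := (zero_lt_one.trans (one_lt_order P L)).ne'
  rw [← nsmul_right_inj horder, ← add_left_inj (∑ y, v y), hsum, hsum,
    card_filter_mem_eq_lineCount, card_filter_mem_eq_lineCount, lineCount_eq_lineCount]

end Configuration

theorem stmt_0 {P L : Type*} [Membership P L] [Fintype P] [Fintype L]
    [ProjectivePlane P L] (f : P → ℝ) (c : ℝ)
    (hf : ∀ l : L, lineSum f l = c) :
    (∀ a b : P, f a = f b) ∧ ¬ Function.Injective f := by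
  have hconst := ProjectivePlane.eq_of_lineSum_eq hf
  have : Nontrivial P := by
    rw [← Fintype.one_lt_card_iff_nontrivial, ProjectivePlane.card_points P L]
    nlinarith [ProjectivePlane.one_lt_order P L]
  obtain ⟨a, b, hab⟩ := exists_pair_ne P
  exact ⟨hconst, fun hinj => hab (hinj (hconst a b))⟩
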